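/- arXiv:2311.14202 — 8 statements merged into one kernel-verified Lean document; each statement's English description precedes it below -/
import Mathlib

section
/- Suppose the Hamiltonian matrix H = [[F, G],[−K, −Fᴴ]] has a Lagrangian invariant subspace spanned by the columns of [W1; W2] with W1ᴴW1 + W2ᴴW2 = I and W1ᴴW2 = W2ᴴW1, satisfying H·[W1; W2] = [W1; W2]·T11 for some T11 ∈ ℂ^{n×n}. If the pair (F, G) is controllable, then W1 is invertible. -/
/-!
If `W₁` were singular, its kernel would be `T₁₁`-invariant: for `W₁ x = 0` the first block
row gives `G W₂ x = W₁ T₁₁ x`, and the Lagrangian identity makes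
`(W₂ x)ᴴ G (W₂ x) = (W₁ x)ᴴ W₂ T₁₁ x = 0`, so `G W₂ x = 0` since `G ≥ 0`. The kernel then
contains an eigenvector `v` of `T₁₁`, and the second block row makes `y = W₂ v` a left
eigenvector of `F` with `yᴴ G = 0`. By the Popov–Belevitch–Hautus
test `y = 0`, so `v = (W₁ᴴ W₁ + W₂ᴴ W₂) v = 0`, a contradiction.
-/

open Matrix
open scoped ComplexOrder

namespace Matrix

section RowRank

variable {K : Type*} [Field K] {m p : Type*} [Fintype m] [Fintype p]

theorem vecMul_injective_of_rank_eq_card {M : Matrix m p K} (h : M.rank = Fintype.card m) :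
    Function.Injective M.vecMul := by
  rw [vecMul_injective_iff, linearIndependent_iff_card_eq_finrank_span, ← h,
    rank_eq_finrank_span_row]
  rfl

theorem eq_zero_of_vecMul_eq_smul_of_rank_fromCols [DecidableEq m] {F : Matrix m m K}
    {G : Matrix m p K} {s : K} (hrank : (fromCols (s • 1 - F) G).rank = Fintype.card m)
    {z : m → K} (hF : z ᵥ* F = s • z) (hG : z ᵥ* G = 0) : z = 0 := by
  refine vecMul_injective_of_rank_eq_card hrank ?_
  simp [vecMul_sub, vecMul_smul, hF, hG]

end RowRank

theorem exists_eigenvector_mem_ker_of_not_isUnit {K : Type*} [Field K] [IsAlgClosed K]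
    {n : Type*} [Fintype n] [DecidableEq n] {A T : Matrix n n K} (hA : ¬IsUnit A)
    (hT : ∀ x, A *ᵥ x = 0 → A *ᵥ (T *ᵥ x) = 0) :
    ∃ v ≠ 0, ∃ μ : K, A *ᵥ v = 0 ∧ T *ᵥ v = μ • v := by
  have hker : LinearMap.ker A.mulVecLin ≠ ⊥ := by
    rwa [Ne, LinearMap.ker_eq_bot, coe_mulVecLin, mulVec_injective_iff_isUnit]
  have : Nontrivial (LinearMap.ker A.mulVecLin) := Submodule.nontrivial_iff_ne_bot.mpr hker
  obtain ⟨μ, hμ⟩ := Module.End.exists_eigenvalue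
    (T.mulVecLin.restrict (p := LinearMap.ker A.mulVecLin) (q := LinearMap.ker A.mulVecLin) hT)
  obtain ⟨v, hv⟩ := hμ.exists_hasEigenvector
  refine ⟨v, fun h => hv.2 (Subtype.ext h), μ, v.2, ?_⟩
  exact congrArg Subtype.val hv.apply_eq_smul

end Matrix

section Hamiltonian

variable {𝕜 : Type*} [RCLike 𝕜] {n : Type*} [Fintype n] {F G W₁ W₂ T : Matrix n n 𝕜}

theorem Matrix.PosSemidef.mulVec_mulVec_eq_zero_of_lagrangian (hG : G.PosSemidef)
    (hlag : W₁ᴴ * W₂ = W₂ᴴ * W₁) (heq : F * W₁ + G * W₂ = W₁ * T) {x : n → 𝕜}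
    (hx : W₁ *ᵥ x = 0) : G *ᵥ (W₂ *ᵥ x) = 0 := by
  have hGW : G *ᵥ (W₂ *ᵥ x) = W₁ *ᵥ (T *ᵥ x) := by
    simpa [add_mulVec, ← mulVec_mulVec, hx] using congrArg (· *ᵥ x) heq
  refine (hG.dotProduct_mulVec_zero_iff _).mp ?_
  calc star (W₂ *ᵥ x) ⬝ᵥ (G *ᵥ (W₂ *ᵥ x)) = star x ⬝ᵥ ((W₂ᴴ * W₁ * T) *ᵥ x) := by
        rw [hGW, star_mulVec, ← dotProduct_mulVec, mulVec_mulVec, mulVec_mulVec,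
          Matrix.mul_assoc]
    _ = star (W₁ *ᵥ x) ⬝ᵥ (W₂ *ᵥ (T *ᵥ x)) := by
        rw [← hlag, star_mulVec, ← dotProduct_mulVec, mulVec_mulVec, mulVec_mulVec,
          Matrix.mul_assoc]
    _ = 0 := by rw [hx, star_zero, zero_dotProduct]

theorem Matrix.PosSemidef.ker_invariant_of_lagrangian (hG : G.PosSemidef)
    (hlag : W₁ᴴ * W₂ = W₂ᴴ * W₁) (heq : F * W₁ + G * W₂ = W₁ * T) {x : n → 𝕜}
    (hx : W₁ *ᵥ x = 0) : W₁ *ᵥ (T *ᵥ x) = 0 := by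
  rw [mulVec_mulVec, ← heq, add_mulVec, ← mulVec_mulVec, ← mulVec_mulVec, hx,
    hG.mulVec_mulVec_eq_zero_of_lagrangian hlag heq hx, mulVec_zero, add_zero]

end Hamiltonian

theorem stmt3_general {n : ℕ}
    (F G K : Matrix (Fin n) (Fin n) ℂ)
    (hG : G.PosSemidef)
    (W1 W2 T11 : Matrix (Fin n) (Fin n) ℂ)
    (H : Matrix (Fin n ⊕ Fin n) (Fin n ⊕ Fin n) ℂ)
    (hH : H = Matrix.fromBlocks F G (-K) (-Fᴴ))
    (hinv : H * Matrix.fromRows W1 W2 = Matrix.fromRows W1 W2 * T11)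
    (horth : (Matrix.fromRows W1 W2)ᴴ * Matrix.fromRows W1 W2 = 1)
    (hlag : W1ᴴ * W2 = W2ᴴ * W1)
    (hctrb : ∀ s : ℂ,
      (Matrix.fromCols (s • (1 : Matrix (Fin n) (Fin n) ℂ) - F) G).rank = n) :
    IsUnit W1 := by
  rw [hH, fromBlocks_mul_fromRows, fromRows_mul] at hinv
  have heq₁ : F * W1 + G * W2 = W1 * T11 := congrArg toRows₁ hinv
  have heq₂ : -K * W1 + -Fᴴ * W2 = W2 * T11 := congrArg toRows₂ hinv
  rw [conjTranspose_fromRows_eq_fromCols_conjTranspose, fromCols_mul_fromRows] at horth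
  by_contra hW1
  obtain ⟨v, hv, μ, hW1v, hTv⟩ := exists_eigenvector_mem_ker_of_not_isUnit hW1
    fun _ hx => hG.ker_invariant_of_lagrangian hlag heq₁ hx
  have hGy : G *ᵥ (W2 *ᵥ v) = 0 := hG.mulVec_mulVec_eq_zero_of_lagrangian hlag heq₁ hW1v
  have hFy : Fᴴ *ᵥ (W2 *ᵥ v) = -μ • (W2 *ᵥ v) := by
    have := congrArg (· *ᵥ v) heq₂
    simp only [add_mulVec, neg_mulVec, ← mulVec_mulVec, hW1v, hTv, mulVec_smul] at this
    simpa [neg_eq_iff_eq_neg] using this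
  have hy : W2 *ᵥ v = 0 := by
    refine star_eq_zero.mp <| eq_zero_of_vecMul_eq_smul_of_rank_fromCols
      (s := -star μ) ((hctrb _).trans (Fintype.card_fin n).symm) ?_ ?_
    · rw [← conjTranspose_conjTranspose F, ← star_mulVec, hFy, star_smul, star_neg]
    · rw [← hG.isHermitian.eq, ← star_mulVec, hGy, star_zero]
  apply hv
  rw [← one_mulVec v, ← horth, add_mulVec, ← mulVec_mulVec, ← mulVec_mulVec, hW1v, hy]
  simp

theorem stmt3 {n : ℕ}
    (F G K : Matrix (Fin n) (Fin n) ℂ)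
    (hG : G.PosSemidef) (hK : K.PosSemidef)
    (W1 W2 T11 : Matrix (Fin n) (Fin n) ℂ)
    (H : Matrix (Fin n ⊕ Fin n) (Fin n ⊕ Fin n) ℂ)
    (hH : H = Matrix.fromBlocks F G (-K) (-Fᴴ))
    (hinv : H * Matrix.fromRows W1 W2 = Matrix.fromRows W1 W2 * T11)
    (horth : (Matrix.fromRows W1 W2)ᴴ * Matrix.fromRows W1 W2 = 1)
    (hlag : W1ᴴ * W2 = W2ᴴ * W1)
    (hctrb : ∀ s : ℂ,
      (Matrix.fromCols (s • (1 : Matrix (Fin n) (Fin n) ℂ) - F) G).rank = n) :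
    IsUnit W1 :=
  stmt3_general F G K hG W1 W2 T11 H hH hinv horth hlag hctrb
end

section
/- Suppose the Hamiltonian matrix H = [[F, G],[−K, −Fᴴ]] satisfies H·[W1; W2] = [W1; W2]·T11 with [W1; W2] of full column rank n and W1ᴴW2 = W2ᴴW1. If the pair (F, K) is observable, then W2 is invertible. -/
/-!
If `W₂ x = 0`, the Lagrangian condition `W₁ᴴ W₂ = W₂ᴴ W₁` gives `⟪W₁ x, W₂ T x⟫ = 0`, while the
second block row of `H [W₁; W₂] = [W₁; W₂] T` gives `W₂ T x = -K W₁ x`. Hence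
`⟪W₁ x, K W₁ x⟫ = 0`, so `K W₁ x = 0` as `K ≥ 0`, and then `W₂ T x = 0`: the kernel of `W₂` is
`T`-invariant. If it were nonzero it would contain an eigenvector `T x = s x`, and the first block
row gives `F W₁ x = s W₁ x` with `K W₁ x = 0`. Observability forces `W₁ x = 0`, so
`[W₁; W₂] x = 0`, contradicting full column rank.
-/

open Matrix
open scoped ComplexOrder

namespace Matrix

section Field

variable {K : Type*} [Field K] {m ι : Type*} [Fintype ι]

lemma eq_zero_of_rank_eq_card_of_mulVec_eq_zero {M : Matrix m ι K}
    (hM : M.rank = Fintype.card ι) {x : ι → K} (hx : M *ᵥ x = 0) : x = 0 := by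
  have hker : LinearMap.ker M.mulVecLin = ⊥ := by
    have := M.mulVecLin.finrank_range_add_finrank_ker
    rw [Module.finrank_fintype_fun_eq_card, ← rank, hM] at this
    exact Submodule.finrank_eq_zero.mp (by omega)
  simpa [hker] using (show x ∈ LinearMap.ker M.mulVecLin from hx)

/-- The Hautus observability test. -/
lemma eq_zero_of_mulVec_eq_smul_of_mulVec_eq_zero [DecidableEq ι] {F : Matrix ι ι K}
    {C : Matrix m ι K} {s : K} (hs : (fromRows (s • 1 - F) C).rank = Fintype.card ι)
    {x : ι → K} (hFx : F *ᵥ x = s • x) (hCx : C *ᵥ x = 0) : x = 0 :=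
  eq_zero_of_rank_eq_card_of_mulVec_eq_zero hs <| by
    rw [fromRows_mulVec, sub_mulVec, smul_mulVec, one_mulVec, hFx, hCx, sub_self,
      Sum.elim_zero_zero]

lemma exists_mulVec_eq_smul_of_not_isUnit [IsAlgClosed K] [DecidableEq ι] {A T : Matrix ι ι K}
    (hA : ¬IsUnit A) (hT : ∀ x, A *ᵥ x = 0 → A *ᵥ (T *ᵥ x) = 0) :
    ∃ (s : K) (x : ι → K), x ≠ 0 ∧ A *ᵥ x = 0 ∧ T *ᵥ x = s • x := by
  set V := LinearMap.ker A.mulVecLin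
  have hTV : ∀ x ∈ V, T.mulVecLin x ∈ V := hT
  have : Nontrivial V := by
    rw [isUnit_iff_isUnit_det, isUnit_iff_ne_zero, not_not] at hA
    obtain ⟨v, hv, hAv⟩ := exists_mulVec_eq_zero_iff.mpr hA
    exact ⟨⟨⟨v, hAv⟩, 0, fun h => hv (congrArg Subtype.val h)⟩⟩
  obtain ⟨s, hs⟩ := Module.End.exists_eigenvalue (T.mulVecLin.restrict hTV)
  obtain ⟨⟨x, hxV⟩, hx⟩ := hs.exists_hasEigenvector
  refine ⟨s, x, fun h => hx.2 (by simp [h]), hxV, ?_⟩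
  simpa using congrArg Subtype.val hx.apply_eq_smul

end Field

section Hamiltonian

variable {𝕜 ι : Type*} [RCLike 𝕜] [Fintype ι] {F G K W₁ W₂ T : Matrix ι ι 𝕜}

lemma mulVec_of_mulVec_eq_zero_of_isLagrangian (hK : K.PosSemidef)
    (hinv : fromBlocks F G (-K) (-Fᴴ) * fromRows W₁ W₂ = fromRows W₁ W₂ * T)
    (hlag : W₁ᴴ * W₂ = W₂ᴴ * W₁) {x : ι → 𝕜} (hx : W₂ *ᵥ x = 0) :
    K *ᵥ (W₁ *ᵥ x) = 0 ∧ W₂ *ᵥ (T *ᵥ x) = 0 ∧ F *ᵥ (W₁ *ᵥ x) = W₁ *ᵥ (T *ᵥ x) := by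
  rw [fromBlocks_mul_fromRows, fromRows_mul, fromRows_ext_iff] at hinv
  obtain ⟨hrow₁, hrow₂⟩ := hinv
  have hFx : F *ᵥ (W₁ *ᵥ x) = W₁ *ᵥ (T *ᵥ x) := by
    simpa [add_mulVec, ← mulVec_mulVec, hx] using congrArg (· *ᵥ x) hrow₁
  have hKx : -(K *ᵥ (W₁ *ᵥ x)) = W₂ *ᵥ (T *ᵥ x) := by
    simpa [add_mulVec, neg_mulVec, ← mulVec_mulVec, hx] using congrArg (· *ᵥ x) hrow₂
  have hortho : star (W₁ *ᵥ x) ⬝ᵥ (W₂ *ᵥ (T *ᵥ x)) = 0 := by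
    rw [star_mulVec, dotProduct_mulVec, vecMul_vecMul, hlag, ← vecMul_vecMul, ← star_mulVec, hx,
      star_zero, zero_vecMul, zero_dotProduct]
  have hK₀ : K *ᵥ (W₁ *ᵥ x) = 0 := by
    rw [← hKx, dotProduct_neg, neg_eq_zero] at hortho
    exact (hK.dotProduct_mulVec_zero_iff _).mp hortho
  exact ⟨hK₀, by rw [← hKx, hK₀, neg_zero], hFx⟩

end Hamiltonian

end Matrix

theorem stmt4_general {n : ℕ}
    (F G K : Matrix (Fin n) (Fin n) ℂ)
    (hK : K.PosSemidef)
    (W1 W2 T11 : Matrix (Fin n) (Fin n) ℂ)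
    (H : Matrix (Fin n ⊕ Fin n) (Fin n ⊕ Fin n) ℂ)
    (hH : H = Matrix.fromBlocks F G (-K) (-Fᴴ))
    (hinv : H * Matrix.fromRows W1 W2 = Matrix.fromRows W1 W2 * T11)
    (hrank : (Matrix.fromRows W1 W2).rank = n)
    (hlag : W1ᴴ * W2 = W2ᴴ * W1)
    (hobs : ∀ s : ℂ,
      (Matrix.fromRows (s • (1 : Matrix (Fin n) (Fin n) ℂ) - F) K).rank = n) :
    IsUnit W2 := by
  subst hH
  have hker {x : Fin n → ℂ} (hx : W2 *ᵥ x = 0) :=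
    mulVec_of_mulVec_eq_zero_of_isLagrangian hK hinv hlag hx
  by_contra hW2
  obtain ⟨s, x, hx₀, hW2x, hTx⟩ :=
    exists_mulVec_eq_smul_of_not_isUnit hW2 fun y hy => (hker hy).2.1
  obtain ⟨hKx, -, hFx⟩ := hker hW2x
  have hW1x : W1 *ᵥ x = 0 :=
    eq_zero_of_mulVec_eq_smul_of_mulVec_eq_zero (by simpa using hobs s)
      (by rw [hFx, hTx, mulVec_smul]) hKx
  refine hx₀ (eq_zero_of_rank_eq_card_of_mulVec_eq_zero (by simpa using hrank) ?_)
  rw [fromRows_mulVec, hW1x, hW2x, Sum.elim_zero_zero]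

theorem stmt4 {n : ℕ}
    (F G K : Matrix (Fin n) (Fin n) ℂ)
    (hG : G.PosSemidef) (hK : K.PosSemidef)
    (W1 W2 T11 : Matrix (Fin n) (Fin n) ℂ)
    (H : Matrix (Fin n ⊕ Fin n) (Fin n ⊕ Fin n) ℂ)
    (hH : H = Matrix.fromBlocks F G (-K) (-Fᴴ))
    (hinv : H * Matrix.fromRows W1 W2 = Matrix.fromRows W1 W2 * T11)
    (hrank : (Matrix.fromRows W1 W2).rank = n)
    (hlag : W1ᴴ * W2 = W2ᴴ * W1)
    (hobs : ∀ s : ℂ,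
      (Matrix.fromRows (s • (1 : Matrix (Fin n) (Fin n) ℂ) - F) K).rank = n) :
    IsUnit W2 :=
  stmt4_general F G K hK W1 W2 T11 H hH hinv hrank hlag hobs
end

section
/- Let X = Xᴴ > 0 solve the algebraic Riccati equation FᴴX + XF + XGX + K = 0 with G ≥ 0, K ≥ 0, and suppose (F, K) is observable. If λ is any eigenvalue of F with eigenvector x ≠ 0, then Re(λ) < 0, i.e. F is asymptotically stable. -/
/-! Testing the Riccati equation against an eigenvector `x` of `F` with eigenvalue `λ` gives
`2 Re λ · xᴴXx = -((Xx)ᴴG(Xx) + xᴴKx)`. Here `xᴴXx > 0`, the `G`-term is nonnegative, and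
observability makes `xᴴKx` positive, so `Re λ < 0`. -/

open Matrix
open scoped ComplexOrder

section QuadraticForm

variable {ι R : Type*} [Fintype ι] [CommRing R] [StarRing R]
  {F X : Matrix ι ι R} {x : ι → R} {lam : R}

theorem dotProduct_mul_mulVec_of_mulVec_eq_smul (hFx : F *ᵥ x = lam • x) :
    star x ⬝ᵥ (X * F) *ᵥ x = lam * (star x ⬝ᵥ X *ᵥ x) := by
  rw [← mulVec_mulVec, hFx, mulVec_smul, dotProduct_smul, smul_eq_mul]

theorem dotProduct_conjTranspose_mul_mulVec_of_mulVec_eq_smul (hFx : F *ᵥ x = lam • x) :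
    star x ⬝ᵥ (Fᴴ * X) *ᵥ x = star lam * (star x ⬝ᵥ X *ᵥ x) := by
  rw [← mulVec_mulVec, dotProduct_mulVec, vecMul_conjTranspose, star_star, hFx, star_smul,
    smul_dotProduct, smul_eq_mul]

theorem dotProduct_lyapunov_mulVec_of_mulVec_eq_smul (hFx : F *ᵥ x = lam • x) :
    star x ⬝ᵥ (Fᴴ * X + X * F) *ᵥ x = (star lam + lam) * (star x ⬝ᵥ X *ᵥ x) := by
  rw [add_mulVec, dotProduct_add, dotProduct_conjTranspose_mul_mulVec_of_mulVec_eq_smul hFx,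
    dotProduct_mul_mulVec_of_mulVec_eq_smul hFx, add_mul]

end QuadraticForm

theorem Complex.re_neg_of_star_add_self_mul_neg {lam a : ℂ} (ha : 0 < a)
    (h : (star lam + lam) * a < 0) : lam.re < 0 := by
  have h_re := (Complex.neg_iff.mp h).1
  rw [Complex.star_def, add_comm, Complex.add_conj, Complex.re_ofReal_mul] at h_re
  linarith [neg_of_mul_neg_left h_re (Complex.pos_iff.mp ha).1.le]

theorem re_neg_of_dotProduct_lyapunov_neg {ι : Type*} [Fintype ι] {F X : Matrix ι ι ℂ}
    {x : ι → ℂ} {lam : ℂ} (hX : X.PosDef) (hx : x ≠ 0) (hFx : F *ᵥ x = lam • x)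
    (hneg : star x ⬝ᵥ (Fᴴ * X + X * F) *ᵥ x < 0) : lam.re < 0 := by
  rw [dotProduct_lyapunov_mulVec_of_mulVec_eq_smul hFx] at hneg
  exact Complex.re_neg_of_star_add_self_mul_neg (hX.dotProduct_mulVec_pos hx) hneg

theorem stmt5 {n : ℕ}
    (F G K X : Matrix (Fin n) (Fin n) ℂ)
    (hG : G.PosSemidef) (hK : K.PosSemidef)
    (hX : X.PosDef)
    (hare : Fᴴ * X + X * F + X * G * X + K = 0)
    (hobs : ∀ (lam : ℂ) (x : Fin n → ℂ), x ≠ 0 → F.mulVec x = lam • x → K.mulVec x ≠ 0) :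
    ∀ (lam : ℂ) (x : Fin n → ℂ), x ≠ 0 → F.mulVec x = lam • x → lam.re < 0 := by
  intro lam x hx hFx
  have hXGX : (X * G * X).PosSemidef := by
    simpa only [hX.isHermitian.eq] using hG.conjTranspose_mul_mul_same X
  have hKx : 0 < star x ⬝ᵥ K *ᵥ x :=
    (hK.dotProduct_mulVec_nonneg x).lt_of_ne'
      (mt (hK.dotProduct_mulVec_zero_iff x).mp (hobs lam x hx hFx))
  have hlyap : Fᴴ * X + X * F = -(X * G * X + K) :=
    eq_neg_of_add_eq_zero_left (by rw [← add_assoc, hare])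
  refine re_neg_of_dotProduct_lyapunov_neg hX hx hFx ?_
  rw [hlyap, neg_mulVec, dotProduct_neg, add_mulVec, dotProduct_add, neg_neg_iff_pos]
  exact add_pos_of_nonneg_of_pos (hXGX.dotProduct_mulVec_nonneg x) hKx
end

section
/- Let H = [[F, G],[−K, −Fᴴ]] be a Hamiltonian matrix and suppose W = [W1; W2] satisfies HW = W T11, WᴴW = I, Wᴴ J W = 0. Then with Q = [[W1, −W2],[W2, W1]], the matrix Qᴴ H Q is block upper triangular of the form [[T11, T12],[0, −T11ᴴ]] for some T12, i.e. H admits a Hamiltonian Schur form. -/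
open Matrix
open scoped ComplexOrder

/-!
Write `Q = [W, Jᴴ W]`. The upper left block `Wᴴ H W` of `Qᴴ H Q` is `T₁₁` since `H W = W T₁₁` and
`Wᴴ W = 1`; the lower left block `Wᴴ J H W = Wᴴ J W T₁₁` vanishes because the range of `W` is
Lagrangian; and the lower right block `Wᴴ (J H) Jᴴ W = Wᴴ Hᴴ (J J)ᴴ W` is `-T₁₁ᴴ` because `J H` is
Hermitian and `J² = -1`.
-/

namespace Matrix

variable {m k l R : Type*} [Fintype m] [Ring R]

lemma fromBlocks_zero_one_neg_one_zero_mul_self [Fintype l] [DecidableEq l] :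
    fromBlocks 0 1 (-1) 0 * fromBlocks 0 1 (-1) 0 = (-1 : Matrix (l ⊕ l) (l ⊕ l) R) := by
  rw [fromBlocks_multiply, ← fromBlocks_one, fromBlocks_neg]
  simp

variable [StarRing R]

lemma conjTranspose_fromBlocks_zero_one_neg_one_zero_mul_fromRows [Fintype l] [DecidableEq l]
    (A B : Matrix l k R) :
    (fromBlocks 0 1 (-1) 0 : Matrix (l ⊕ l) (l ⊕ l) R)ᴴ * fromRows A B = fromRows (-B) A := by
  rw [fromBlocks_conjTranspose, fromBlocks_mul_fromRows]
  simp

lemma conjTranspose_fromCols_mul_mul_fromCols {p q : Type*} (A : Matrix m p R) (B : Matrix m q R)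
    (M : Matrix m m R) (C : Matrix m p R) (D : Matrix m q R) :
    (fromCols A B)ᴴ * M * fromCols C D =
      fromBlocks (Aᴴ * M * C) (Aᴴ * M * D) (Bᴴ * M * C) (Bᴴ * M * D) := by
  rw [conjTranspose_fromCols_eq_fromRows_conjTranspose, fromRows_mul, fromRows_mul_fromCols]

section Lagrangian

variable [Fintype k] {J H : Matrix m m R} {W : Matrix m k R} {T : Matrix k k R}

lemma conjTranspose_mul_mul_eq_of_invariant [DecidableEq k] (hinv : H * W = W * T)
    (horth : Wᴴ * W = 1) : Wᴴ * H * W = T := by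
  rw [Matrix.mul_assoc, hinv, ← Matrix.mul_assoc, horth, Matrix.one_mul]

lemma conjTranspose_mul_mul_conjTranspose_mul_eq_zero_of_lagrangian (hinv : H * W = W * T)
    (hlag : Wᴴ * J * W = 0) : (Jᴴ * W)ᴴ * H * W = 0 := by
  rw [conjTranspose_mul, conjTranspose_conjTranspose, Matrix.mul_assoc (Wᴴ * J), hinv,
    ← Matrix.mul_assoc, hlag, Matrix.zero_mul]

lemma conjTranspose_mul_mul_conjTranspose_mul_eq_neg_of_hamiltonian [DecidableEq m] [DecidableEq k]
    (hJJ : J * J = -1) (hHam : (J * H)ᴴ = J * H) (hinv : H * W = W * T) (horth : Wᴴ * W = 1) :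
    (Jᴴ * W)ᴴ * H * (Jᴴ * W) = -Tᴴ := by
  have hconj : J * H * Jᴴ = -Hᴴ := by
    rw [← hHam, conjTranspose_mul, Matrix.mul_assoc, ← conjTranspose_mul, hJJ,
      conjTranspose_neg, conjTranspose_one, Matrix.mul_neg, Matrix.mul_one]
  calc (Jᴴ * W)ᴴ * H * (Jᴴ * W) = Wᴴ * (J * H * Jᴴ) * W := by
        simp only [conjTranspose_mul, conjTranspose_conjTranspose, Matrix.mul_assoc]
    _ = -(Wᴴ * H * W)ᴴ := by
        rw [hconj, Matrix.mul_neg, Matrix.neg_mul, conjTranspose_mul, conjTranspose_mul,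
          conjTranspose_conjTranspose, Matrix.mul_assoc]
    _ = -Tᴴ := by rw [conjTranspose_mul_mul_eq_of_invariant hinv horth]

theorem conjTranspose_fromCols_mul_mul_fromCols_of_lagrangian [DecidableEq m] [DecidableEq k]
    (hJJ : J * J = -1) (hHam : (J * H)ᴴ = J * H) (hinv : H * W = W * T) (horth : Wᴴ * W = 1)
    (hlag : Wᴴ * J * W = 0) :
    (fromCols W (Jᴴ * W))ᴴ * H * fromCols W (Jᴴ * W) =
      fromBlocks T (Wᴴ * H * (Jᴴ * W)) 0 (-Tᴴ) := by
  rw [conjTranspose_fromCols_mul_mul_fromCols, conjTranspose_mul_mul_eq_of_invariant hinv horth,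
    conjTranspose_mul_mul_conjTranspose_mul_eq_zero_of_lagrangian hinv hlag,
    conjTranspose_mul_mul_conjTranspose_mul_eq_neg_of_hamiltonian hJJ hHam hinv horth]

end Lagrangian

end Matrix

theorem stmt10_general {n : ℕ}
    (W1 W2 T11 : Matrix (Fin n) (Fin n) ℂ)
    (H J : Matrix (Fin n ⊕ Fin n) (Fin n ⊕ Fin n) ℂ)
    (hJ : J = Matrix.fromBlocks 0 1 (-1) 0)
    (hHam : (J * H)ᴴ = J * H)
    (hinv : H * Matrix.fromRows W1 W2 = Matrix.fromRows W1 W2 * T11)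
    (horth : (Matrix.fromRows W1 W2)ᴴ * Matrix.fromRows W1 W2 = 1)
    (hlag : (Matrix.fromRows W1 W2)ᴴ * J * Matrix.fromRows W1 W2 = 0) :
    ∃ T12 : Matrix (Fin n) (Fin n) ℂ,
      (Matrix.fromBlocks W1 (-W2) W2 W1)ᴴ * H * Matrix.fromBlocks W1 (-W2) W2 W1 =
        Matrix.fromBlocks T11 T12 0 (-T11ᴴ) := by
  have hQ : fromBlocks W1 (-W2) W2 W1 = fromCols (fromRows W1 W2) (Jᴴ * fromRows W1 W2) := by
    rw [hJ, conjTranspose_fromBlocks_zero_one_neg_one_zero_mul_fromRows,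
      fromCols_fromRows_eq_fromBlocks]
  have hJJ : J * J = -1 := hJ ▸ fromBlocks_zero_one_neg_one_zero_mul_self
  exact ⟨_, hQ ▸ conjTranspose_fromCols_mul_mul_fromCols_of_lagrangian hJJ hHam hinv horth hlag⟩

theorem stmt10 {n : ℕ}
    (F G K : Matrix (Fin n) (Fin n) ℂ)
    (W1 W2 T11 : Matrix (Fin n) (Fin n) ℂ)
    (H J : Matrix (Fin n ⊕ Fin n) (Fin n ⊕ Fin n) ℂ)
    (hH : H = Matrix.fromBlocks F G (-K) (-Fᴴ))
    (hJ : J = Matrix.fromBlocks 0 1 (-1) 0)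
    (hHam : (J * H)ᴴ = J * H)
    (hinv : H * Matrix.fromRows W1 W2 = Matrix.fromRows W1 W2 * T11)
    (horth : (Matrix.fromRows W1 W2)ᴴ * Matrix.fromRows W1 W2 = 1)
    (hlag : (Matrix.fromRows W1 W2)ᴴ * J * Matrix.fromRows W1 W2 = 0) :
    ∃ T12 : Matrix (Fin n) (Fin n) ℂ,
      (Matrix.fromBlocks W1 (-W2) W2 W1)ᴴ * H * Matrix.fromBlocks W1 (-W2) W2 W1 =
        Matrix.fromBlocks T11 T12 0 (-T11ᴴ) :=
  stmt10_general W1 W2 T11 H J hJ hHam hinv horth hlag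
end

section
/- If X = Xᴴ solves the perturbed Riccati equation (F+ΔF)ᴴX + X(F+ΔF) + X(G+ΔG)X + (K+ΔK) = 0, where Δ = [[ΔG, ΔF],[ΔFᴴ, ΔK]] is Hermitian positive semidefinite, then X satisfies the Riccati inequality FᴴX + XF + XGX + K ≤ 0 (i.e. this matrix is negative semidefinite). -/
/-!
Expanding the Riccati map `R_{F,G,K}(X) = FᴴX + XF + XGX + K` in the perturbation gives
`R_{F+ΔF, G+ΔG, K+ΔK}(X) = R_{F,G,K}(X) + [X I] Δ [X I]ᴴ` for Hermitian `X`,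
so if the perturbed equation holds, `-R_{F,G,K}(X)` is a congruence of the positive
semidefinite matrix `Δ`.
-/

open Matrix
open scoped ComplexOrder

namespace Matrix

variable {m n R : Type*} [Fintype m] [Fintype n] [DecidableEq m]

theorem fromCols_one_mul_fromBlocks_mul_conjTranspose [Ring R] [StarRing R]
    (X : Matrix m n R) (A : Matrix n n R) (B : Matrix n m R) (D : Matrix m m R) :
    fromCols X (1 : Matrix m m R) * fromBlocks A B Bᴴ D * (fromCols X (1 : Matrix m m R))ᴴ
      = X * A * Xᴴ + X * B + Bᴴ * Xᴴ + D := by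
  rw [conjTranspose_fromCols_eq_fromRows_conjTranspose, fromCols_mul_fromBlocks,
    fromCols_mul_fromRows]
  simp only [Matrix.one_mul, conjTranspose_one, Matrix.mul_one, Matrix.add_mul]
  abel

theorem PosSemidef.mul_mul_conjTranspose_add_of_fromBlocks [Ring R] [StarRing R] [PartialOrder R]
    [StarOrderedRing R] {A : Matrix n n R} {B : Matrix n m R} {D : Matrix m m R}
    (h : (fromBlocks A B Bᴴ D).PosSemidef) (X : Matrix m n R) :
    (X * A * Xᴴ + X * B + Bᴴ * Xᴴ + D).PosSemidef := by
  simpa only [fromCols_one_mul_fromBlocks_mul_conjTranspose]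
    using h.mul_mul_conjTranspose_same (fromCols X (1 : Matrix m m R))

end Matrix

theorem riccati_add_of_isHermitian {n R : Type*} [Fintype n] [Ring R] [StarRing R]
    {X : Matrix n n R} (hX : X.IsHermitian) (F G K DF DG DK : Matrix n n R) :
    (F + DF)ᴴ * X + X * (F + DF) + X * (G + DG) * X + (K + DK)
      = (Fᴴ * X + X * F + X * G * X + K) + (X * DG * Xᴴ + X * DF + DFᴴ * Xᴴ + DK) := by
  rw [hX.eq]
  simp only [conjTranspose_add, add_mul, mul_add]
  abel

theorem stmt11 {n : ℕ}
    (F G K DF DG DK X : Matrix (Fin n) (Fin n) ℂ)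
    (hX : X.IsHermitian)
    (hDelta : (Matrix.fromBlocks DG DF DFᴴ DK).PosSemidef)
    (heq : (F + DF)ᴴ * X + X * (F + DF) + X * (G + DG) * X + (K + DK) = 0) :
    (-(Fᴴ * X + X * F + X * G * X + K)).PosSemidef := by
  rw [riccati_add_of_isHermitian hX, add_eq_zero_iff_neg_eq] at heq
  exact heq ▸ hDelta.mul_mul_conjTranspose_add_of_fromBlocks X
end

section
/- Let A be Hermitian with a 2×2 block partition A = [[A11, A21ᴴ],[A21, A22]]. If A ≥ 0 and there exists a nonzero vector x with A11 x = 0 and A21 x ≠ 0, then one arrives at a contradiction; i.e., A ≥ 0 and A11 x = 0 imply A21 x = 0. Consequently, if F = [[F11, 0],[0, F22]] is block diagonal, Δ is Hermitian positive semidefinite with blocks Δ11 (partitioned again into blocks matching F), and (F, Δ11) is observable, then (F11, Δ11^{(1,1)}) is observable, where Δ11^{(1,1)} is the leading principal block of Δ11. -/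
open Matrix
open scoped ComplexOrder

/-!
For a positive semidefinite `M`, `x⋆ M x = 0` forces `M x = 0`. At the vector `(x, 0)` the
quadratic form of `M = fromBlocks A B C D` is `x⋆ A x`, so `A x = 0` gives `M (x, 0) = 0`,
whose lower block is `C x = 0`. For observability, an eigenvector `x` of `F₁₁` lifts to the
eigenvector `(x, 0)` of the block-diagonal `F`, and `Δ (x, 0) = (Δ₁₁ x, Δ₂₁ x)` vanishes as soon as
`Δ₁₁ x = 0`.
-/

namespace Matrix

variable {l m n o R 𝕜 : Type*} [Fintype m] [Fintype n]

theorem fromBlocks_mulVec_sum_elim_zero [NonUnitalNonAssocSemiring R] (A : Matrix l m R)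
    (B : Matrix l n R) (C : Matrix o m R) (D : Matrix o n R) (x : m → R) :
    fromBlocks A B C D *ᵥ Sum.elim x 0 = Sum.elim (A *ᵥ x) (C *ᵥ x) := by
  simp [fromBlocks_mulVec]

theorem PosSemidef.mulVec_eq_zero_of_fromBlocks [RCLike 𝕜] {A : Matrix m m 𝕜}
    {B : Matrix m n 𝕜} {C : Matrix n m 𝕜} {D : Matrix n n 𝕜}
    (h : (fromBlocks A B C D).PosSemidef) {x : m → 𝕜} (hx : A *ᵥ x = 0) : C *ᵥ x = 0 := by
  have hquad : star (Sum.elim x 0) ⬝ᵥ fromBlocks A B C D *ᵥ Sum.elim x 0 = 0 := by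
    rw [fromBlocks_mulVec_sum_elim_zero, hx]
    simp [dotProduct, Fintype.sum_sum_type]
  have hker := (h.dotProduct_mulVec_zero_iff _).mp hquad
  rw [fromBlocks_mulVec_sum_elim_zero] at hker
  exact funext fun i => congrFun hker (Sum.inr i)

def IsObservable [NonUnitalNonAssocSemiring R] (F C : Matrix n n R) : Prop :=
  ∀ (lam : R) (x : n → R), x ≠ 0 → F *ᵥ x = lam • x → C *ᵥ x ≠ 0

theorem IsObservable.of_fromBlocks [RCLike 𝕜] {F₁₁ : Matrix m m 𝕜} {F₂₂ : Matrix n n 𝕜}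
    {D₁₁ : Matrix m m 𝕜} {D₁₂ : Matrix m n 𝕜} {D₂₁ : Matrix n m 𝕜} {D₂₂ : Matrix n n 𝕜}
    (hD : (fromBlocks D₁₁ D₁₂ D₂₁ D₂₂).PosSemidef)
    (hobs : IsObservable (fromBlocks F₁₁ 0 0 F₂₂) (fromBlocks D₁₁ D₁₂ D₂₁ D₂₂)) :
    IsObservable F₁₁ D₁₁ := by
  intro lam x hx hF hDx
  refine hobs lam (Sum.elim x 0) ?_ ?_ ?_
  · exact fun h => hx (funext fun i => congrFun h (Sum.inl i))
  · rw [fromBlocks_mulVec_sum_elim_zero, hF, zero_mulVec]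
    ext (i | i) <;> simp
  · rw [fromBlocks_mulVec_sum_elim_zero, hDx, hD.mulVec_eq_zero_of_fromBlocks hDx,
      Sum.elim_zero_zero]

end Matrix

theorem stmt15 {n1 n2 : ℕ}
    (A11 : Matrix (Fin n1) (Fin n1) ℂ) (A21 : Matrix (Fin n2) (Fin n1) ℂ)
    (A22 : Matrix (Fin n2) (Fin n2) ℂ)
    (hA : (Matrix.fromBlocks A11 A21ᴴ A21 A22).PosSemidef)
    (F11 : Matrix (Fin n1) (Fin n1) ℂ) (F22 : Matrix (Fin n2) (Fin n2) ℂ)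
    (D11 : Matrix (Fin n1) (Fin n1) ℂ) (D21 : Matrix (Fin n2) (Fin n1) ℂ)
    (D22 : Matrix (Fin n2) (Fin n2) ℂ)
    (hD : (Matrix.fromBlocks D11 D21ᴴ D21 D22).PosSemidef)
    (hobs : ∀ (lam : ℂ) (x : Fin n1 ⊕ Fin n2 → ℂ), x ≠ 0 →
      (Matrix.fromBlocks F11 0 0 F22).mulVec x = lam • x →
      (Matrix.fromBlocks D11 D21ᴴ D21 D22).mulVec x ≠ 0) :
    (∀ x : Fin n1 → ℂ, A11.mulVec x = 0 → A21.mulVec x = 0) ∧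
      (∀ (lam : ℂ) (x : Fin n1 → ℂ), x ≠ 0 →
        F11.mulVec x = lam • x → D11.mulVec x ≠ 0) :=
  ⟨fun _ hx => hA.mulVec_eq_zero_of_fromBlocks hx, IsObservable.of_fromBlocks (F₂₂ := F22) hD hobs⟩
end

section
/- Let X be a Hermitian solution of FᴴX + XF + XGX + K = 0, with F, G, K partitioned as F = [[F11, 0],[F21, F22]], G = [[G11, G21ᴴ],[G21, G22]], K = [[K11, 0],[0, 0]]. Write X = [[I, Z],[0, I]]·diag(X11, X22)·[[I, 0],[Zᴴ, I]] with X11, X22 invertible. Then: (1) X11 solves F11ᴴX11 + X11F11 + X11G11X11 + K11 = 0; (2) Z solves the Sylvester equation (F11 + G11X11)ᴴZ − Z F22ᴴ + F21ᴴ + X11G21ᴴ = 0; and (3) X22 solves F22ᴴX22 + X22F22 + X22(G22 + ZᴴG21ᴴ + G21Z + ZᴴG11Z)X22 = 0. -/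
open Matrix
open scoped ComplexOrder

/-!
Conjugating the Riccati equation by `T⁻¹ = [[I, -Z], [0, I]]` turns its residual at
`X = T diag(X₁₁, X₂₂) Tᴴ` into the residual at the block-diagonal `diag(X₁₁, X₂₂)` of the
transformed data `Tᴴ F T⁻ᴴ`, `Tᴴ G T`, `T⁻¹ K T⁻ᴴ`. The transformed `F` stays block lower
triangular and the transformed `K` equals `K`, so the three nonzero blocks of the vanishing
residual are the three equations; the off-diagonal one carries a right factor `X₂₂`, which
is cancelled by invertibility.
-/

namespace Matrix

variable {α : Type*} {m n : Type*}

section Semiring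

variable [Semiring α] [StarRing α]

def riccati [Fintype n] (F G K X : Matrix n n α) : Matrix n n α :=
  Fᴴ * X + X * F + X * G * X + K

theorem riccati_congr [Fintype n] [DecidableEq n] {T T' : Matrix n n α} (hT : T' * T = 1)
    (F G K D : Matrix n n α) :
    T' * riccati F G K (T * D * Tᴴ) * T'ᴴ =
      riccati (Tᴴ * F * T'ᴴ) (Tᴴ * G * T) (T' * K * T'ᴴ) D := by
  have hT_star : Tᴴ * T'ᴴ = 1 := by rw [← conjTranspose_mul, hT, conjTranspose_one]
  simp only [riccati, conjTranspose_mul, conjTranspose_conjTranspose, Matrix.mul_add,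
    Matrix.add_mul, Matrix.mul_assoc]
  simp only [← Matrix.mul_assoc T' T, hT, hT_star, Matrix.one_mul, Matrix.mul_one]

theorem riccati_fromBlocks_diagonal [Fintype m] [Fintype n]
    (F₁₁ G₁₁ K₁₁ X₁ : Matrix m m α) (F₁₂ G₁₂ K₁₂ : Matrix m n α)
    (F₂₁ G₂₁ K₂₁ : Matrix n m α) (F₂₂ G₂₂ K₂₂ X₂ : Matrix n n α) :
    riccati (fromBlocks F₁₁ F₁₂ F₂₁ F₂₂) (fromBlocks G₁₁ G₁₂ G₂₁ G₂₂)
        (fromBlocks K₁₁ K₁₂ K₂₁ K₂₂) (fromBlocks X₁ 0 0 X₂) =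
      fromBlocks (riccati F₁₁ G₁₁ K₁₁ X₁) (F₂₁ᴴ * X₂ + X₁ * F₁₂ + X₁ * G₁₂ * X₂ + K₁₂)
        (F₁₂ᴴ * X₁ + X₂ * F₂₁ + X₂ * G₂₁ * X₁ + K₂₁) (riccati F₂₂ G₂₂ K₂₂ X₂) := by
  simp [riccati, fromBlocks_conjTranspose, fromBlocks_multiply, fromBlocks_add]

end Semiring

section Ring

variable [Fintype m] [Fintype n] [DecidableEq m] [DecidableEq n] [Ring α]

theorem fromBlocks_one_neg_mul_fromBlocks_one (Z : Matrix m n α) :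
    fromBlocks 1 (-Z) 0 1 * fromBlocks 1 Z 0 1 = (1 : Matrix (m ⊕ n) (m ⊕ n) α) := by
  simp [fromBlocks_multiply, ← fromBlocks_one]

variable [StarRing α]

theorem conjTranspose_fromBlocks_one_mul_lowerTriangular_mul (Z : Matrix m n α)
    (F₁₁ : Matrix m m α) (F₂₁ : Matrix n m α) (F₂₂ : Matrix n n α) :
    (fromBlocks 1 Z 0 1)ᴴ * fromBlocks F₁₁ 0 F₂₁ F₂₂ * (fromBlocks 1 (-Z) 0 1)ᴴ =
      fromBlocks F₁₁ 0 (Zᴴ * F₁₁ + F₂₁ - F₂₂ * Zᴴ) F₂₂ := by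
  simp [fromBlocks_conjTranspose, fromBlocks_multiply, sub_eq_add_neg]

theorem conjTranspose_fromBlocks_one_mul_fromBlocks_mul (Z : Matrix m n α)
    (G₁₁ : Matrix m m α) (G₁₂ : Matrix m n α) (G₂₁ : Matrix n m α) (G₂₂ : Matrix n n α) :
    (fromBlocks 1 Z 0 1)ᴴ * fromBlocks G₁₁ G₁₂ G₂₁ G₂₂ * fromBlocks 1 Z 0 1 =
      fromBlocks G₁₁ (G₁₁ * Z + G₁₂) (Zᴴ * G₁₁ + G₂₁)
        (G₂₂ + Zᴴ * G₁₂ + G₂₁ * Z + Zᴴ * G₁₁ * Z) := by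
  simp only [fromBlocks_conjTranspose, fromBlocks_multiply, conjTranspose_one,
    conjTranspose_zero, Matrix.one_mul, Matrix.zero_mul, Matrix.mul_one, Matrix.mul_zero,
    add_zero, Matrix.add_mul, Matrix.mul_assoc]
  congr 1
  abel

theorem fromBlocks_one_neg_mul_fromBlocks_topLeft_mul (Z : Matrix m n α) (K₁₁ : Matrix m m α) :
    fromBlocks 1 (-Z) 0 1 * fromBlocks K₁₁ 0 0 0 * (fromBlocks 1 (-Z) 0 1)ᴴ =
      fromBlocks K₁₁ 0 0 (0 : Matrix n n α) := by
  simp [fromBlocks_conjTranspose, fromBlocks_multiply]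

end Ring

end Matrix

theorem stmt18_general {n1 n2 : ℕ}
    (F11 G11 K11 X11 : Matrix (Fin n1) (Fin n1) ℂ)
    (F21 G21 : Matrix (Fin n2) (Fin n1) ℂ)
    (F22 G22 X22 : Matrix (Fin n2) (Fin n2) ℂ)
    (Z : Matrix (Fin n1) (Fin n2) ℂ)
    (hG : (Matrix.fromBlocks G11 G21ᴴ G21 G22).IsHermitian)
    (hX11 : X11.PosDef) (hX22 : X22.PosDef)
    (X : Matrix (Fin n1 ⊕ Fin n2) (Fin n1 ⊕ Fin n2) ℂ)
    (hXdef : X = Matrix.fromBlocks 1 Z 0 1 * Matrix.fromBlocks X11 0 0 X22 *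
      Matrix.fromBlocks 1 0 Zᴴ 1)
    (hare : (Matrix.fromBlocks F11 0 F21 F22)ᴴ * X + X * Matrix.fromBlocks F11 0 F21 F22 +
      X * Matrix.fromBlocks G11 G21ᴴ G21 G22 * X + Matrix.fromBlocks K11 0 0 0 = 0) :
    F11ᴴ * X11 + X11 * F11 + X11 * G11 * X11 + K11 = 0 ∧
      (F11 + G11 * X11)ᴴ * Z - Z * F22ᴴ + F21ᴴ + X11 * G21ᴴ = 0 ∧
      F22ᴴ * X22 + X22 * F22 +
        X22 * (G22 + Zᴴ * G21ᴴ + G21 * Z + Zᴴ * G11 * Z) * X22 = 0 := by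
  have hX : X = fromBlocks 1 Z 0 1 * fromBlocks X11 0 0 X22 * (fromBlocks 1 Z 0 1)ᴴ := by
    simpa [fromBlocks_conjTranspose] using hXdef
  have hres := riccati_congr (fromBlocks_one_neg_mul_fromBlocks_one Z)
    (fromBlocks F11 0 F21 F22) (fromBlocks G11 G21ᴴ G21 G22) (fromBlocks K11 0 0 0)
    (fromBlocks X11 0 0 X22)
  rw [← hX, riccati, hare, Matrix.mul_zero, Matrix.zero_mul,
    conjTranspose_fromBlocks_one_mul_lowerTriangular_mul,
    conjTranspose_fromBlocks_one_mul_fromBlocks_mul,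
    fromBlocks_one_neg_mul_fromBlocks_topLeft_mul, riccati_fromBlocks_diagonal, eq_comm,
    ← fromBlocks_zero, fromBlocks_inj] at hres
  obtain ⟨h₁₁, h₁₂, -, h₂₂⟩ := hres
  refine ⟨h₁₁, ?_, by simpa only [riccati, add_zero] using h₂₂⟩
  have hG11 : G11ᴴ = G11 := (isHermitian_fromBlocks_iff.1 hG).1
  have hZ : (Zᴴ * F11 + F21 - F22 * Zᴴ)ᴴ + X11 * (G11 * Z + G21ᴴ) = 0 := by
    let := hX22.isUnit.invertible
    rw [← Matrix.mul_left_inj_of_invertible X22, Matrix.zero_mul, ← h₁₂]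
    simp only [Matrix.mul_zero, add_zero, Matrix.add_mul, Matrix.mul_assoc]
  rw [← hZ]
  simp only [conjTranspose_add, conjTranspose_sub, conjTranspose_mul, conjTranspose_conjTranspose,
    hG11, hX11.isHermitian.eq, Matrix.add_mul, Matrix.mul_add, Matrix.mul_assoc]
  abel

theorem stmt18 {n1 n2 : ℕ}
    (F11 G11 K11 X11 : Matrix (Fin n1) (Fin n1) ℂ)
    (F21 G21 : Matrix (Fin n2) (Fin n1) ℂ)
    (F22 G22 X22 : Matrix (Fin n2) (Fin n2) ℂ)
    (Z : Matrix (Fin n1) (Fin n2) ℂ)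
    (hG : (Matrix.fromBlocks G11 G21ᴴ G21 G22).IsHermitian)
    (hK : (Matrix.fromBlocks K11 0 0 0 : Matrix (Fin n1 ⊕ Fin n2) (Fin n1 ⊕ Fin n2) ℂ).IsHermitian)
    (hX11 : X11.PosDef) (hX22 : X22.PosDef)
    (X : Matrix (Fin n1 ⊕ Fin n2) (Fin n1 ⊕ Fin n2) ℂ)
    (hXdef : X = Matrix.fromBlocks 1 Z 0 1 * Matrix.fromBlocks X11 0 0 X22 *
      Matrix.fromBlocks 1 0 Zᴴ 1)
    (hare : (Matrix.fromBlocks F11 0 F21 F22)ᴴ * X + X * Matrix.fromBlocks F11 0 F21 F22 +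
      X * Matrix.fromBlocks G11 G21ᴴ G21 G22 * X + Matrix.fromBlocks K11 0 0 0 = 0) :
    F11ᴴ * X11 + X11 * F11 + X11 * G11 * X11 + K11 = 0 ∧
      (F11 + G11 * X11)ᴴ * Z - Z * F22ᴴ + F21ᴴ + X11 * G21ᴴ = 0 ∧
      F22ᴴ * X22 + X22 * F22 +
        X22 * (G22 + Zᴴ * G21ᴴ + G21 * Z + Zᴴ * G11 * Z) * X22 = 0 :=
  stmt18_general F11 G11 K11 X11 F21 G21 F22 G22 X22 Z hG hX11 hX22 X hXdef hare
end

section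
/- Suppose the linear system matrices satisfy D + Dᴴ > 0, and set F := A − B(D+Dᴴ)^{−1}C, G := B(D+Dᴴ)^{−1}Bᴴ, K := Cᴴ(D+Dᴴ)^{−1}C. Then a Hermitian matrix X satisfies the KYP linear matrix inequality [[AᴴX + XA, XB − Cᴴ],[BᴴX − C, −(D+Dᴴ)]] ≤ 0 if and only if FᴴX + XF + XGX + K ≤ 0. -/
open Matrix
open scoped ComplexOrder

theorem stmt19 {n m : ℕ}
    (A : Matrix (Fin n) (Fin n) ℂ) (B : Matrix (Fin n) (Fin m) ℂ)
    (C : Matrix (Fin m) (Fin n) ℂ) (D : Matrix (Fin m) (Fin m) ℂ)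
    (hD : (D + Dᴴ).PosDef)
    (X : Matrix (Fin n) (Fin n) ℂ) (hX : X.IsHermitian) :
    (-(Matrix.fromBlocks (Aᴴ * X + X * A) (X * B - Cᴴ) (Bᴴ * X - C)
        (-(D + Dᴴ)))).PosSemidef ↔
      (-((A - B * (D + Dᴴ)⁻¹ * C)ᴴ * X + X * (A - B * (D + Dᴴ)⁻¹ * C) +
          X * (B * (D + Dᴴ)⁻¹ * Bᴴ) * X + Cᴴ * (D + Dᴴ)⁻¹ * C)).PosSemidef := by
  set S := D + Dᴴ with hS
  have hSh : Sᴴ = S := hD.isHermitian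
  have hSinv : S⁻¹ᴴ = S⁻¹ := by rw [conjTranspose_nonsing_inv, hSh]
  haveI := hD.isUnit.invertible
  have hQ : Bᴴ * X - C = (X * B - Cᴴ)ᴴ := by
    simp [conjTranspose_sub, conjTranspose_mul, hX.eq]
  have hkey : (-(Matrix.fromBlocks (Aᴴ * X + X * A) (X * B - Cᴴ) (Bᴴ * X - C) (-S)))
      = Matrix.fromBlocks (-(Aᴴ * X + X * A)) (-(X * B - Cᴴ)) (-(X * B - Cᴴ))ᴴ S := by
    rw [Matrix.fromBlocks_neg, neg_neg, hQ, conjTranspose_neg]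
  rw [hkey, Matrix.PosDef.fromBlocks₂₂ _ _ hD]
  have heq : -(Aᴴ * X + X * A) - -(X * B - Cᴴ) * S⁻¹ * (-(X * B - Cᴴ))ᴴ
      = -((A - B * S⁻¹ * C)ᴴ * X + X * (A - B * S⁻¹ * C) +
          X * (B * S⁻¹ * Bᴴ) * X + Cᴴ * S⁻¹ * C) := by
    simp only [conjTranspose_neg, conjTranspose_sub, conjTranspose_mul,
      conjTranspose_conjTranspose, hSinv, hX.eq, Matrix.neg_mul, Matrix.mul_neg,
      neg_neg, Matrix.sub_mul, Matrix.mul_sub, Matrix.mul_assoc]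
    abel
  rw [heq]
end
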